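/- arXiv:1708.08953 — 4 statements merged into one kernel-verified Lean document; each statement's English description precedes it below -/
import Mathlib

section
/- Let $(\mathcal{X},\mu)$ be a probability space with a measure-preserving $\mathbb{Z}$-action and $\{B_t\}_{t>0}$ a monotone family of shrinking targets. Fix $i\geq 1$. Then for almost every $x\in\mathcal{X}$, $\liminf_{t\to\infty}\frac{\log\tau^i_{B_t}(x)}{-\log\mu(B_t)}\geq 1$. -/
open MeasureTheory Filter
open scoped ENNReal

open Classical in
/-- The `i`-th hitting time `τ_B^i(x)`: the least `m ≥ 1` such that the orbit points
`x h_1, …, x h_m` lie in `B` exactly `i` times (junk value `sInf ∅ = 0` if it never happens). -/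
noncomputable def hitTime {X : Type*} (h : ℤ → X → X) (B : Set X) (i : ℕ) (x : X) : ℕ :=
  sInf {m : ℕ | 1 ≤ m ∧ ((Finset.Icc 1 m).filter (fun j => h (j : ℤ) x ∈ B)).card = i}

open Classical in
/-- The ratio `log τ^i_{B_t}(x) / (-log μ(B_t))`, interpreted as `⊤` when the orbit of `x`
never hits `B t` for the `i`-th time. -/
noncomputable def hitRatio {X : Type*} [MeasurableSpace X] (μ : Measure X)
    (h : ℤ → X → X) (B : ℝ → Set X) (i : ℕ) (x : X) (t : ℝ) : EReal :=
  if {m : ℕ | 1 ≤ m ∧ ((Finset.Icc 1 m).filter (fun j => h (j : ℤ) x ∈ B t)).card = i}.Nonempty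
  then ((Real.log (hitTime h (B t) i x) / (-Real.log ((μ (B t)).toReal)) : ℝ) : EReal)
  else ⊤

/-! Fix `n` and put `q = 2^{-(n+1)}`. Since the targets are nested, the union of all targets of
measure at most `q^k` is an increasing countable union, hence still has measure at most `q^k`; so
one of the first `2^{kn}` orbit points lands in it with probability at most `2^{kn} q^k = 2^{-k}`.
By Borel–Cantelli almost every orbit eventually avoids these unions within these windows. When
`q^{k+1} < μ(B_t) ≤ q^k` the `i`-th hitting time therefore exceeds `2^{kn}`, and the ratio is at
least `kn / ((k+1)(n+1)) ≥ (n/(n+1))^2`; let `n → ∞`. -/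

theorem exists_antitone_seq_forall_exists_le {S : Set ℝ} (hS : S.Nonempty) (hbdd : BddBelow S) :
    ∃ u : ℕ → ℝ, Antitone u ∧ (∀ n, u n ∈ S) ∧ ∀ t ∈ S, ∃ n, u n ≤ t := by
  by_cases hinf : sInf S ∈ S
  · exact ⟨fun _ => sInf S, antitone_const, fun _ => hinf, fun t ht => ⟨0, csInf_le hbdd ht⟩⟩
  obtain ⟨u, hu, hlim, huS⟩ := exists_seq_tendsto_sInf hS hbdd
  refine ⟨u, hu, huS, fun t ht => ?_⟩
  have hlt : sInf S < t := (csInf_le hbdd ht).lt_of_ne (by rintro rfl; exact hinf ht)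
  exact (hlim.eventually (gt_mem_nhds hlt)).exists.imp fun _ => le_of_lt

theorem measure_biUnion_le_of_antitoneOn {X : Type*} [MeasurableSpace X] {μ : Measure X}
    {B : ℝ → Set X} {S : Set ℝ} (hbdd : BddBelow S) (hB : AntitoneOn B S) {ε : ℝ≥0∞}
    (hε : ∀ t ∈ S, μ (B t) ≤ ε) : μ (⋃ t ∈ S, B t) ≤ ε := by
  rcases S.eq_empty_or_nonempty with rfl | hS
  · simp
  obtain ⟨u, hu, huS, hcoinit⟩ := exists_antitone_seq_forall_exists_le hS hbdd
  have hunion : ⋃ t ∈ S, B t = ⋃ n, B (u n) := by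
    refine subset_antisymm (Set.iUnion₂_subset fun t ht => ?_) (Set.iUnion_subset fun n =>
      Set.subset_biUnion_of_mem (huS n))
    obtain ⟨n, hn⟩ := hcoinit t ht
    exact (hB (huS n) ht hn).trans (Set.subset_iUnion (fun n => B (u n)) n)
  have hmono : Monotone fun n => B (u n) := fun m n hmn => hB (huS n) (huS m) (hu hmn)
  rw [hunion, hmono.measure_iUnion]
  exact iSup_le fun n => hε _ (huS n)

theorem exists_lt_succ_le_of_eventually_lt {α : Type*} [LinearOrder α] {c : ℕ → α} {a : α}
    {K : ℕ} (hK : a ≤ c K) (h : ∀ᶠ k in atTop, c k < a) :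
    ∃ k ≥ K, c (k + 1) < a ∧ a ≤ c k := by
  by_contra! hstep
  have hle : ∀ k ≥ K, a ≤ c k := fun k hk =>
    Nat.le_induction hK (fun k hk ih => not_lt.1 fun hlt => (hstep k hk hlt).not_ge ih) k hk
  obtain ⟨k, hlt, hk⟩ := (h.and (eventually_ge_atTop K)).exists
  exact (hle k hk).not_gt hlt

theorem ae_eventually_forall_notMem_of_tsum_ne_top {X : Type*} [MeasurableSpace X]
    {μ : Measure X} {g : ℕ → X → X} (hg : ∀ j, MeasurePreserving (g j) μ μ)
    {U : ℕ → Set X} {W : ℕ → ℕ} (hsum : ∑' k, (W k : ℝ≥0∞) * μ (U k) ≠ ∞) :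
    ∀ᵐ x ∂μ, ∀ᶠ k in atTop, ∀ j ∈ Finset.Icc 1 (W k), g j x ∉ U k := by
  have hE : ∀ k, μ (⋃ j ∈ Finset.Icc 1 (W k), g j ⁻¹' U k) ≤ W k * μ (U k) := fun k =>
    calc μ (⋃ j ∈ Finset.Icc 1 (W k), g j ⁻¹' U k)
        ≤ ∑ j ∈ Finset.Icc 1 (W k), μ (g j ⁻¹' U k) := measure_biUnion_finset_le _ _
      _ ≤ ∑ _j ∈ Finset.Icc 1 (W k), μ (U k) :=
          Finset.sum_le_sum fun j _ => (hg j).measure_preimage_le _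
      _ = W k * μ (U k) := by simp
  filter_upwards [ae_eventually_notMem (ne_top_of_le_ne_top hsum (ENNReal.tsum_le_tsum hE))]
    with x hx
  filter_upwards [hx] with k hk j hj hjU
  exact hk (Set.mem_biUnion hj hjU)

open Classical in
theorem lt_hitTime {X : Type*} {h : ℤ → X → X} {B : Set X} {i : ℕ} {x : X} {M : ℕ} (hi : 1 ≤ i)
    (hne : {m : ℕ | 1 ≤ m ∧ ((Finset.Icc 1 m).filter (fun j => h (j : ℤ) x ∈ B)).card = i}.Nonempty)
    (hM : ∀ j ∈ Finset.Icc 1 M, h (j : ℤ) x ∉ B) : M < hitTime h B i x := by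
  obtain ⟨-, hcard⟩ : hitTime h B i x ∈ _ := Nat.sInf_mem hne
  obtain ⟨j, hj⟩ := Finset.card_pos.1 (hcard ▸ hi : 0 < _)
  -- `Finset.Icc 1 m` was lifted to `Finset ℤ` through the `Finset` monad when `hitTime` elaborated.
  simp only [Finset.pure_def, Finset.bind_def, Finset.sup_singleton_apply, Finset.mem_filter,
    Finset.mem_image, Finset.mem_Icc] at hj
  obtain ⟨⟨a, ⟨ha1, haN⟩, rfl⟩, haB⟩ := hj
  by_contra! hle
  exact hM a (Finset.mem_Icc.2 ⟨ha1, haN.trans hle⟩) haB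

theorem sq_div_succ_le_log_div_neg_log {n k N : ℕ} {a : ℝ} (hnk : n < k) (hN : 2 ^ (k * n) < N)
    (hlow : ((2 : ℝ)⁻¹ ^ (n + 1)) ^ (k + 1) < a) (hup : a ≤ ((2 : ℝ)⁻¹ ^ (n + 1)) ^ k) :
    ((n : ℝ) / (n + 1)) ^ 2 ≤ Real.log N / -Real.log a := by
  have hlog2 : 0 < Real.log 2 := Real.log_pos one_lt_two
  have ha : 0 < a := lt_of_le_of_lt (by positivity) hlow
  have ha1 : a < 1 := hup.trans_lt
    (pow_lt_one₀ (by positivity) (pow_lt_one₀ (by norm_num) (by norm_num) (by omega)) (by omega))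
  have hden : -Real.log a < (k + 1) * (n + 1) * Real.log 2 := by
    have := Real.log_lt_log (by positivity) hlow
    simp only [Real.log_pow, Real.log_inv] at this
    push_cast at this
    linarith
  have hnum : k * n * Real.log 2 ≤ Real.log N := by
    have := Real.log_le_log (by positivity) (show (2 : ℝ) ^ (k * n) ≤ N by exact_mod_cast hN.le)
    rw [Real.log_pow] at this
    push_cast at this
    linarith
  have hpos : 0 < -Real.log a := neg_pos.2 (Real.log_neg ha ha1)
  have hkn : (n : ℝ) ≤ k := by exact_mod_cast hnk.le
  calc ((n : ℝ) / (n + 1)) ^ 2 ≤ k * n / ((k + 1) * (n + 1)) := by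
        rw [div_pow, div_le_div_iff₀ (by positivity) (by positivity)]
        nlinarith [mul_nonneg (mul_nonneg n.cast_nonneg (by positivity : (0 : ℝ) ≤ n + 1))
          (sub_nonneg.2 hkn)]
    _ = k * n * Real.log 2 / ((k + 1) * (n + 1) * Real.log 2) :=
        (mul_div_mul_right _ _ hlog2.ne').symm
    _ ≤ k * n * Real.log 2 / -Real.log a :=
        div_le_div_of_nonneg_left (by positivity) hpos hden.le
    _ ≤ Real.log N / -Real.log a := div_le_div_of_nonneg_right hnum hpos.le

theorem ae_eventually_forall_orbit_notMem {X : Type*} [MeasurableSpace X] {μ : Measure X}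
    {h : ℤ → X → X} (hmeas : ∀ k : ℤ, MeasurePreserving (h k) μ μ) {B : ℝ → Set X}
    (hmono : ∀ s t : ℝ, 0 < s → s ≤ t → B t ⊆ B s) (n : ℕ) :
    ∀ᵐ x ∂μ, ∀ᶠ k in atTop, ∀ t > 0, μ (B t) ≤ ((2⁻¹ : ℝ≥0∞) ^ (n + 1)) ^ k →
      ∀ j ∈ Finset.Icc (1 : ℕ) (2 ^ (k * n)), h (j : ℤ) x ∉ B t := by
  set q : ℝ≥0∞ := 2⁻¹ ^ (n + 1)
  set S : ℕ → Set ℝ := fun k => {t | 0 < t ∧ μ (B t) ≤ q ^ k}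
  have hU : ∀ k, μ (⋃ t ∈ S k, B t) ≤ q ^ k := fun k =>
    measure_biUnion_le_of_antitoneOn ⟨0, fun t ht => ht.1.le⟩
      (fun s hs t _ hst => hmono s t hs.1 hst) fun t ht => ht.2
  have hgeom : ∀ k, ((2 ^ (k * n) : ℕ) : ℝ≥0∞) * q ^ k = 2⁻¹ ^ k := fun k => by
    have h2q : (2 : ℝ≥0∞) ^ n * q = 2⁻¹ := by
      rw [show q = 2⁻¹ ^ n * 2⁻¹ from pow_succ _ _, ← mul_assoc, ← mul_pow,
        ENNReal.mul_inv_cancel two_ne_zero ENNReal.ofNat_ne_top, one_pow, one_mul]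
    push_cast [mul_comm k n, pow_mul]
    rw [← mul_pow, h2q]
  have hsum : ∑' k, ((2 ^ (k * n) : ℕ) : ℝ≥0∞) * μ (⋃ t ∈ S k, B t) ≠ ∞ := by
    refine ne_top_of_le_ne_top ?_ (ENNReal.tsum_le_tsum fun k => mul_le_mul_right (hU k) _)
    simp only [hgeom, ENNReal.tsum_geometric, ENNReal.one_sub_inv_two, inv_inv]
    exact ENNReal.ofNat_ne_top
  filter_upwards [ae_eventually_forall_notMem_of_tsum_ne_top (fun j => hmeas j) hsum] with x hx
  filter_upwards [hx] with k hk t ht htq j hj hjB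
  exact hk j hj (Set.mem_biUnion ⟨ht, htq⟩ hjB)

theorem ae_eventually_sq_div_succ_le_hitRatio {X : Type*} [MeasurableSpace X] {μ : Measure X}
    {h : ℤ → X → X} (hmeas : ∀ k : ℤ, MeasurePreserving (h k) μ μ) {B : ℝ → Set X}
    (hmono : ∀ s t : ℝ, 0 < s → s ≤ t → B t ⊆ B s) (hpos : ∀ t : ℝ, 0 < μ (B t))
    (hshrink : Tendsto (fun t : ℝ => μ (B t)) atTop (nhds 0)) {i : ℕ} (hi : 1 ≤ i) (n : ℕ) :
    ∀ᵐ x ∂μ, ∀ᶠ t in atTop, ((((n : ℝ) / (n + 1)) ^ 2 : ℝ) : EReal) ≤ hitRatio μ h B i x t := by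
  set q : ℝ≥0∞ := 2⁻¹ ^ (n + 1)
  have hq : q < 1 := pow_lt_one₀ zero_le (by norm_num) n.succ_ne_zero
  have hq0 : q ≠ 0 := pow_ne_zero _ (ENNReal.inv_ne_zero.2 ENNReal.ofNat_ne_top)
  filter_upwards [ae_eventually_forall_orbit_notMem hmeas hmono n] with x hx
  obtain ⟨K, hK⟩ := eventually_atTop.1 (hx.and (eventually_gt_atTop n))
  filter_upwards [eventually_gt_atTop 0,
    hshrink.eventually_le_const (ENNReal.pow_pos (pos_iff_ne_zero.2 hq0) K)] with t ht htK
  unfold hitRatio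
  split_ifs with hne
  swap
  · exact le_top
  obtain ⟨k, hkK, hlow, hup⟩ := exists_lt_succ_le_of_eventually_lt htK
    ((ENNReal.tendsto_pow_atTop_nhds_zero_of_lt_one hq).eventually (gt_mem_nhds (hpos t)))
  obtain ⟨havoid, hnk⟩ := hK k hkK
  have hfin : μ (B t) ≠ ∞ := ne_top_of_le_ne_top (ENNReal.pow_ne_top (by simp [q])) hup
  refine EReal.coe_le_coe_iff.2 (sq_div_succ_le_log_div_neg_log hnk
    (lt_hitTime hi hne (havoid t ht hup)) ?_ ?_)
  · simpa [q, ENNReal.toReal_pow] using ENNReal.toReal_strict_mono hfin hlow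
  · simpa [q, ENNReal.toReal_pow] using ENNReal.toReal_mono (ENNReal.pow_ne_top (by simp [q])) hup

theorem one_le_liminf_of_forall_eventually_sq_div_succ_le {α : Type*} {l : Filter α}
    {f : α → EReal} (hf : ∀ n : ℕ, ∀ᶠ t in l, ((((n : ℝ) / (n + 1)) ^ 2 : ℝ) : EReal) ≤ f t) :
    1 ≤ liminf f l := by
  have hlim : Tendsto (fun n : ℕ => ((((n : ℝ) / (n + 1)) ^ 2 : ℝ) : EReal)) atTop (nhds 1) := by
    simpa using EReal.tendsto_coe.2 ((tendsto_natCast_div_add_atTop (1 : ℝ)).pow 2)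
  exact le_of_tendsto' hlim fun n => le_liminf_of_le (by isBoundedDefault) (hf n)

theorem stmt2_general {X : Type*} [MeasurableSpace X] (μ : Measure X)
    (h : ℤ → X → X) (hmeas : ∀ k : ℤ, MeasurePreserving (h k) μ μ)
    (B : ℝ → Set X)
    (hmono : ∀ s t : ℝ, 0 < s → s ≤ t → B t ⊆ B s)
    (hpos : ∀ t : ℝ, 0 < μ (B t))
    (hshrink : Tendsto (fun t : ℝ => μ (B t)) atTop (nhds 0))
    (i : ℕ) (hi : 1 ≤ i) :
    ∀ᵐ x ∂μ, (1 : EReal) ≤ Filter.liminf (fun t : ℝ => hitRatio μ h B i x t) atTop := by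
  filter_upwards [ae_all_iff.2 (ae_eventually_sq_div_succ_le_hitRatio hmeas hmono hpos hshrink hi)]
    with x hx
  exact one_le_liminf_of_forall_eventually_sq_div_succ_le hx

theorem stmt2 {X : Type*} [MeasurableSpace X] (μ : Measure X) [IsProbabilityMeasure μ]
    (h : ℤ → X → X) (hmeas : ∀ k : ℤ, MeasurePreserving (h k) μ μ)
    (hact : ∀ k l : ℤ, ∀ x : X, h (k + l) x = h k (h l x))
    (B : ℝ → Set X) (hBmeas : ∀ t, MeasurableSet (B t))
    (hmono : ∀ s t : ℝ, 0 < s → s ≤ t → B t ⊆ B s)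
    (hpos : ∀ t : ℝ, 0 < μ (B t))
    (hshrink : Tendsto (fun t : ℝ => μ (B t)) atTop (nhds 0))
    (i : ℕ) (hi : 1 ≤ i) :
    ∀ᵐ x ∂μ, (1 : EReal) ≤ Filter.liminf (fun t : ℝ => hitRatio μ h B i x t) atTop :=
  stmt2_general μ h hmeas B hmono hpos hshrink i hi
end

section
/- Let $(\mathcal{X},\mu)$ be a probability space with an ergodic measure-preserving $\mathbb{Z}$-action $\{h_m\}_{m\in\mathbb{Z}}$, and let $\{B_m\}_{m\in\mathbb{N}}$ be a monotone decreasing sequence of measurable sets. Then the eventually-always-hitting set $\mathcal{A}_{\mathrm{ah}}=\{x\in\mathcal{X} : \exists M,\ \forall m\geq M,\ \exists 1\le j\le m \text{ with } xh_j\in B_m\}$ has measure either zero or one, provided $\mu\big(\bigcap_{m=1}^\infty B_m\big)=0$. -/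
open MeasureTheory Filter
open scoped ENNReal

theorem stmt3 {X : Type*} [MeasurableSpace X] (μ : Measure X) [IsProbabilityMeasure μ]
    (h : ℤ → X → X) (hmeas : ∀ k : ℤ, MeasurePreserving (h k) μ μ)
    (h0 : ∀ x, h 0 x = x)
    (hact : ∀ k l : ℤ, ∀ x : X, h (k + l) x = h k (h l x))
    (herg : ∀ A : Set X, MeasurableSet A → (h 1) '' A ⊆ A → μ A = 0 ∨ μ A = 1)
    (B : ℕ → Set X) (hBmeas : ∀ m, MeasurableSet (B m)) (hmono : Antitone B)
    (hcap : μ (⋂ m, B m) = 0) :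
    μ {x | ∃ M : ℕ, ∀ m ≥ M, ∃ j : ℕ, 1 ≤ j ∧ j ≤ m ∧ h (j : ℤ) x ∈ B m} = 0 ∨
    μ {x | ∃ M : ℕ, ∀ m ≥ M, ∃ j : ℕ, 1 ≤ j ∧ j ≤ m ∧ h (j : ℤ) x ∈ B m} = 1 := by
  set A := {x | ∃ M : ℕ, ∀ m ≥ M, ∃ j : ℕ, 1 ≤ j ∧ j ≤ m ∧ h (j : ℤ) x ∈ B m} with hA
  set N := ⋂ m, B m with hN
  set C := ⋃ k : ℤ, (h k) ⁻¹' N with hC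
  have hNmeas : MeasurableSet N := MeasurableSet.iInter fun m => hBmeas m
  have hCmeas : MeasurableSet C :=
    MeasurableSet.iUnion fun k => (hmeas k).measurable hNmeas
  have hC0 : μ C = 0 := by
    refine measure_iUnion_null fun k => ?_
    rw [(hmeas k).measure_preimage hNmeas.nullMeasurableSet]
    exact hcap
  have hAeq : A = ⋃ M : ℕ, ⋂ m : ℕ, ⋂ _ : m ≥ M,
      ⋃ j : ℕ, ⋃ _ : 1 ≤ j ∧ j ≤ m, (h (j : ℤ)) ⁻¹' (B m) := by
    ext x
    simp only [hA, Set.mem_setOf_eq, Set.mem_iUnion, Set.mem_iInter, Set.mem_preimage,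
      exists_prop]
    constructor
    · rintro ⟨M, hM⟩
      refine ⟨M, fun m hm => ?_⟩
      obtain ⟨j, a, b, c⟩ := hM m hm
      exact ⟨j, ⟨a, b⟩, c⟩
    · rintro ⟨M, hM⟩
      refine ⟨M, fun m hm => ?_⟩
      obtain ⟨j, ⟨a, b⟩, c⟩ := hM m hm
      exact ⟨j, a, b, c⟩
  have hAmeas : MeasurableSet A := by
    rw [hAeq]
    refine MeasurableSet.iUnion fun M => MeasurableSet.iInter fun m =>
      MeasurableSet.iInter fun _ => MeasurableSet.iUnion fun j =>
      MeasurableSet.iUnion fun _ => (hmeas _).measurable (hBmeas m)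
  have hinv : (h 1) '' (A ∪ C) ⊆ A ∪ C := by
    rintro y ⟨x, hx, rfl⟩
    rcases hx with hx | hx
    · -- x ∈ A
      by_cases hy : h 1 x ∈ A
      · exact Or.inl hy
      · right
        refine Set.mem_iUnion.2 ⟨0, ?_⟩
        simp only [Set.mem_preimage, h0]
        -- show h 1 x ∈ N, i.e. in every B k
        refine Set.mem_iInter.2 fun k => ?_
        obtain ⟨M, hM⟩ := hx
        simp only [hA, Set.mem_setOf_eq, not_exists] at hy
        obtain ⟨m, hmge, hmfail⟩ := by
          have := hy (max M k)
          push_neg at this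
          exact this
        have hm1 : m + 1 ≥ M := le_trans (le_trans (le_max_left M k) hmge) (Nat.le_succ m)
        obtain ⟨j, hj1, hjm, hjB⟩ := hM (m + 1) hm1
        rcases Nat.lt_or_ge j 2 with hj2 | hj2
        · -- j = 1
          interval_cases j
          have : h 1 x ∈ B (m + 1) := hjB
          exact hmono (le_trans (le_max_right M k) (le_trans hmge (Nat.le_succ m))) this
        · -- j ≥ 2 : contradiction with failure at m
          exfalso
          have hcast : ((j - 1 : ℕ) : ℤ) + 1 = (j : ℤ) := by omega
          have hmem : h ((j - 1 : ℕ) : ℤ) (h 1 x) ∈ B m := by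
            rw [← hact, hcast]
            exact hmono (Nat.le_succ m) hjB
          exact hmfail (j - 1) (by omega) (by omega) hmem
    · -- x ∈ C
      right
      obtain ⟨k, hk⟩ := Set.mem_iUnion.1 hx
      refine Set.mem_iUnion.2 ⟨k - 1, ?_⟩
      simp only [Set.mem_preimage] at hk ⊢
      have : h (k - 1) (h 1 x) = h k x := by
        rw [← hact]; ring_nf
      rw [this]
      exact hk
  rcases herg (A ∪ C) (hAmeas.union hCmeas) hinv with h01 | h01
  · exact Or.inl (measure_mono_null Set.subset_union_left h01)
  · right
    have : μ (A ∪ C) = μ A :=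
      le_antisymm ((measure_union_le _ _).trans (by simp [hC0]))
        (measure_mono Set.subset_union_left)
    rw [← this]; exact h01
end

section
/- (Schmidt/Sprindžuk quasi-independence lemma) Let $(\mathcal{X},\mu)$ be a probability space and $\{f_m\}_{m\in\mathbb{N}}$ measurable functions with values in $[0,1]$. Suppose there is a constant $C>0$ such that for all $m\le n$, $\int_{\mathcal{X}}\big(\sum_{i=m}^n f_i(x)-\sum_{i=m}^n\mu(f_i)\big)^2 d\mu(x)\le C\sum_{i=m}^n\mu(f_i)$, where $\mu(f_i)=\int f_i\,d\mu$. If $E_m=\sum_{j=1}^m\mu(f_j)\to\infty$, then for almost every $x$, $\lim_{m\to\infty}\frac{\sum_{j=1}^m f_j(x)}{E_m}=1$. -/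
/-!
The variance bound gives `∫ ((S m - E m) / E m) ^ 2 ≤ C / E m`. Since `E` grows by at most `1` per
step, there are times `n k` with `(k + 1) ^ 2 ≤ E (n k) ≤ (k + 1) ^ 2 + 1`. Along them these bounds
are summable, so the normalized deviations are square-summable almost everywhere and
`S (n k) / E (n k) → 1` a.e. Moreover `E (n (k + 1)) / E (n k) → 1`, so monotonicity of `S` and `E`
squeezes `S m / E m` between neighbouring terms of the subsequence.
-/

open MeasureTheory Filter Topology

lemma StrictMono.eventually_exists_bracket {n : ℕ → ℕ} (hn : StrictMono n) {P : ℕ → Prop}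
    (hP : ∀ᶠ k in atTop, P k) : ∀ᶠ m in atTop, ∃ k, P k ∧ n k ≤ m ∧ m < n (k + 1) := by
  obtain ⟨K, hK⟩ := eventually_atTop.1 hP
  filter_upwards [eventually_ge_atTop (n K)] with m hm
  obtain ⟨k, hkm, hmk⟩ := hn.exists_between_of_tendsto_atTop hn.tendsto_atTop
    (x := m + 1) (Nat.lt_succ_of_le ((hn.monotone (Nat.zero_le K)).trans hm))
  refine ⟨k, hK k ?_, Nat.le_of_lt_succ hkm, hmk⟩
  by_contra! hk
  have : n (k + 1) ≤ n K := hn.monotone hk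
  omega

theorem tendsto_div_of_monotone_of_subseq {E T : ℕ → ℝ} {n : ℕ → ℕ} {l : ℝ}
    (hE : Monotone E) (hT : Monotone T) (hT0 : ∀ m, 0 ≤ T m) (hn : StrictMono n)
    (hEpos : ∀ k, 0 < E (n k))
    (hratio : Tendsto (fun k => E (n (k + 1)) / E (n k)) atTop (𝓝 1))
    (hsub : Tendsto (fun k => T (n k) / E (n k)) atTop (𝓝 l)) :
    Tendsto (fun m => T m / E m) atTop (𝓝 l) := by
  have hupper : Tendsto (fun k => T (n (k + 1)) / E (n k)) atTop (𝓝 l) := by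
    have := (hsub.comp (tendsto_add_atTop_nat 1)).mul hratio
    rw [mul_one] at this
    refine this.congr fun k => ?_
    have := (hEpos (k + 1)).ne'
    simp only [Function.comp_apply]
    field_simp
  have hlower : Tendsto (fun k => T (n k) / E (n (k + 1))) atTop (𝓝 l) := by
    have := hsub.div hratio one_ne_zero
    rw [div_one] at this
    refine this.congr fun k => ?_
    have := (hEpos k).ne'
    simp only [Pi.div_apply]
    field_simp
  refine tendsto_order.2 ⟨fun a ha => ?_, fun a ha => ?_⟩
  · filter_upwards [hn.eventually_exists_bracket (hlower.eventually (lt_mem_nhds ha))]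
      with m ⟨k, hk, hkm, hmk⟩
    calc a < T (n k) / E (n (k + 1)) := hk
      _ ≤ T m / E m := div_le_div₀ (hT0 m) (hT hkm) ((hEpos k).trans_le (hE hkm)) (hE hmk.le)
  · filter_upwards [hn.eventually_exists_bracket (hupper.eventually (gt_mem_nhds ha))]
      with m ⟨k, hk, hkm, hmk⟩
    calc T m / E m ≤ T (n (k + 1)) / E (n k) :=
          div_le_div₀ (hT0 _) (hT hmk.le) (hEpos k) (hE hkm)
      _ < a := hk

lemma tendsto_succ_div_of_sq_le_of_le_sq_add_one {a : ℕ → ℝ}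
    (hlo : ∀ k : ℕ, ((k : ℝ) + 1) ^ 2 ≤ a k) (hhi : ∀ k : ℕ, a k ≤ ((k : ℝ) + 1) ^ 2 + 1) :
    Tendsto (fun k => a (k + 1) / a k) atTop (𝓝 1) := by
  have hpos : ∀ k : ℕ, 0 < a k := fun k => (hlo k).trans_lt' (by positivity)
  have hnext : ∀ k : ℕ, ((k : ℝ) + 2) ^ 2 ≤ a (k + 1) ∧ a (k + 1) ≤ ((k : ℝ) + 2) ^ 2 + 1 := by
    intro k
    have hlo' := hlo (k + 1)
    have hhi' := hhi (k + 1)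
    push_cast at hlo' hhi'
    constructor <;> linarith
  have hbound : Tendsto (fun k : ℕ => 1 + 4 * (1 / ((k : ℝ) + 1))) atTop (𝓝 1) := by
    simpa using ((tendsto_one_div_add_atTop_nhds_zero_nat (𝕜 := ℝ)).const_mul 4).const_add 1
  refine tendsto_of_tendsto_of_tendsto_of_le_of_le tendsto_const_nhds hbound (fun k => ?_)
    (fun k => ?_)
  · rw [one_le_div (hpos k)]
    have : ((k : ℝ) + 1) ^ 2 + 1 ≤ ((k : ℝ) + 2) ^ 2 := by nlinarith [k.cast_nonneg (α := ℝ)]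
    linarith [hhi k, (hnext k).1]
  · rw [div_le_iff₀ (hpos k)]
    calc a (k + 1) ≤ ((k : ℝ) + 1) ^ 2 + 4 * ((k : ℝ) + 1) := by nlinarith [(hnext k).2]
      _ = (1 + 4 * (1 / ((k : ℝ) + 1))) * ((k : ℝ) + 1) ^ 2 := by field_simp
      _ ≤ (1 + 4 * (1 / ((k : ℝ) + 1))) * a k := by gcongr; exact hlo k

lemma exists_mem_Icc_of_tendsto_atTop {E : ℕ → ℝ} (hE : Tendsto E atTop atTop)
    (hstep : ∀ m, E (m + 1) ≤ E m + 1) {t : ℝ} (ht : E 0 < t) :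
    ∃ m, E m ∈ Set.Icc t (t + 1) := by
  classical
  have h : ∃ m, t ≤ E m := (hE.eventually_ge_atTop t).exists
  obtain ⟨j, hj⟩ : ∃ j, Nat.find h = j + 1 :=
    Nat.exists_eq_succ_of_ne_zero fun h0 => ht.not_ge (h0 ▸ Nat.find_spec h)
  have hprev : E j < t := not_le.1 (Nat.find_min h (by omega))
  exact ⟨j + 1, hj ▸ Nat.find_spec h, by linarith [hstep j]⟩

lemma monotone_sum_Icc_one {a : ℕ → ℝ} (ha : ∀ j, 0 ≤ a j) :
    Monotone fun m => ∑ j ∈ Finset.Icc 1 m, a j := fun _ _ hmn =>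
  Finset.sum_le_sum_of_subset_of_nonneg (Finset.Icc_subset_Icc_right hmn) fun j _ _ => ha j

lemma sum_Icc_one_succ_le {a : ℕ → ℝ} (ha : ∀ j, a j ≤ 1) (m : ℕ) :
    ∑ j ∈ Finset.Icc 1 (m + 1), a j ≤ ∑ j ∈ Finset.Icc 1 m, a j + 1 := by
  rw [Finset.sum_Icc_succ_top (Nat.le_add_left 1 m)]
  linarith [ha (m + 1)]

section Integrals

variable {X : Type*} [MeasurableSpace X] {μ : Measure X}

theorem ae_summable_norm_of_summable_integral_norm {E : Type*} [NormedAddCommGroup E] {ι : Type*}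
    [Countable ι] {F : ι → X → E} (hF : ∀ i, Integrable (F i) μ)
    (hsum : Summable fun i => ∫ x, ‖F i x‖ ∂μ) : ∀ᵐ x ∂μ, Summable fun i => ‖F i x‖ := by
  refine summable_norm_of_tsum_eLpNorm_ne_top le_rfl (fun i => (hF i).1) ?_
  simp_rw [eLpNorm_one_eq_lintegral_enorm, ← ofReal_integral_norm_eq_lintegral_enorm (hF _)]
  rw [← ENNReal.ofReal_tsum_of_nonneg (fun i => integral_nonneg fun x => norm_nonneg _) hsum]
  exact ENNReal.ofReal_ne_top

theorem ae_tendsto_zero_of_summable_integral_sq {g : ℕ → X → ℝ} (hg : ∀ k, MemLp (g k) 2 μ)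
    (hsum : Summable fun k => ∫ x, g k x ^ 2 ∂μ) :
    ∀ᵐ x ∂μ, Tendsto (fun k => g k x) atTop (𝓝 0) := by
  have hsq : ∀ k x, ‖g k x ^ 2‖ = g k x ^ 2 := fun k x => Real.norm_of_nonneg (sq_nonneg _)
  filter_upwards [ae_summable_norm_of_summable_integral_norm (fun k => (hg k).integrable_sq)
    (by simpa only [hsq] using hsum)] with x hx
  rw [tendsto_zero_iff_norm_tendsto_zero]
  simpa [hsq, Real.sqrt_sq_eq_abs] using hx.tendsto_atTop_zero.sqrt

lemma integral_sq_sub_div_le {Y : X → ℝ} {c C : ℝ} (hc : 0 < c)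
    (h : ∫ x, (Y x - c) ^ 2 ∂μ ≤ C * c) : ∫ x, ((Y x - c) / c) ^ 2 ∂μ ≤ C / c := by
  simp_rw [div_pow]
  rw [integral_div, div_le_div_iff₀ (by positivity) hc]
  nlinarith

theorem ae_tendsto_div_of_integral_sq_sub_le [IsFiniteMeasure μ] {Y : ℕ → X → ℝ} {c : ℕ → ℝ}
    {C : ℝ} (hY : ∀ k, MemLp (Y k) 2 μ) (hc : ∀ k, 0 < c k) (hsum : Summable fun k => (c k)⁻¹)
    (hvar : ∀ k, ∫ x, (Y k x - c k) ^ 2 ∂μ ≤ C * c k) :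
    ∀ᵐ x ∂μ, Tendsto (fun k => Y k x / c k) atTop (𝓝 1) := by
  have hdev := ae_tendsto_zero_of_summable_integral_sq (μ := μ)
    (g := fun k x => (Y k x - c k) / c k)
    (fun k => by
      simpa only [div_eq_mul_inv, Pi.sub_apply] using
        ((hY k).sub (memLp_const (c k))).mul_const (c k)⁻¹)
    (Summable.of_nonneg_of_le (fun k => integral_nonneg fun x => sq_nonneg _)
      (fun k => integral_sq_sub_div_le (hc k) (hvar k))
      (by simpa only [div_eq_mul_inv] using hsum.mul_left C))
  filter_upwards [hdev] with x hx
  have hx' : Tendsto (fun k => 1 + (Y k x - c k) / c k) atTop (𝓝 1) := by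
    simpa using hx.const_add 1
  refine hx'.congr fun k => ?_
  have := (hc k).ne'
  field_simp
  ring

lemma integral_mem_Icc_zero_one [IsProbabilityMeasure μ] {g : X → ℝ}
    (hg : ∀ x, g x ∈ Set.Icc (0 : ℝ) 1) :
    ∫ x, g x ∂μ ∈ Set.Icc (0 : ℝ) 1 :=
  ⟨integral_nonneg fun x => (hg x).1,
    (integral_mono_of_nonneg (ae_of_all _ fun x => (hg x).1) (integrable_const 1)
      (ae_of_all _ fun x => (hg x).2)).trans_eq (by simp)⟩

end Integrals

theorem stmt4_general {X : Type*} [MeasurableSpace X] (μ : Measure X) [IsProbabilityMeasure μ]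
    (f : ℕ → X → ℝ) (hmeas : ∀ m, Measurable (f m))
    (h01 : ∀ m x, f m x ∈ Set.Icc (0 : ℝ) 1)
    (C : ℝ)
    (hvar : ∀ m n : ℕ, m ≤ n →
      ∫ x, (∑ i ∈ Finset.Icc m n, f i x - ∑ i ∈ Finset.Icc m n, ∫ y, f i y ∂μ) ^ 2 ∂μ
        ≤ C * ∑ i ∈ Finset.Icc m n, ∫ y, f i y ∂μ)
    (hE : Tendsto (fun m : ℕ => ∑ j ∈ Finset.Icc 1 m, ∫ y, f j y ∂μ) atTop atTop) :
    ∀ᵐ x ∂μ, Tendsto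
      (fun m : ℕ => (∑ j ∈ Finset.Icc 1 m, f j x) / (∑ j ∈ Finset.Icc 1 m, ∫ y, f j y ∂μ))
      atTop (nhds 1) := by
  set E : ℕ → ℝ := fun m => ∑ j ∈ Finset.Icc 1 m, ∫ y, f j y ∂μ
  have hμf : ∀ j, ∫ y, f j y ∂μ ∈ Set.Icc (0 : ℝ) 1 := fun j => integral_mem_Icc_zero_one (h01 j)
  have hE_mono : Monotone E := monotone_sum_Icc_one fun j => (hμf j).1
  choose n hn using fun k : ℕ => exists_mem_Icc_of_tendsto_atTop hE
    (sum_Icc_one_succ_le fun j => (hμf j).2) (t := ((k : ℝ) + 1) ^ 2) (by simp [E]; positivity)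
  have hE_pos : ∀ k, 0 < E (n k) := fun k => (hn k).1.trans_lt' (by positivity)
  have hn_pos : ∀ k, 1 ≤ n k := fun k =>
    Nat.one_le_iff_ne_zero.2 fun h0 => (hE_pos k).ne' (by simp [E, h0])
  have hn_mono : StrictMono n := strictMono_nat_of_lt_succ fun k => hE_mono.reflect_lt <| by
    have := (hn (k + 1)).1
    push_cast at this
    nlinarith [(hn k).2, k.cast_nonneg (α := ℝ)]
  have hsub : ∀ᵐ x ∂μ,
      Tendsto (fun k => (∑ j ∈ Finset.Icc 1 (n k), f j x) / E (n k)) atTop (𝓝 1) :=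
    ae_tendsto_div_of_integral_sq_sub_le
      (fun k => memLp_finsetSum _ fun j _ => MemLp.of_bound (hmeas j).aestronglyMeasurable 1
        (ae_of_all _ fun x => by rw [Real.norm_of_nonneg (h01 j x).1]; exact (h01 j x).2))
      hE_pos
      (Summable.of_nonneg_of_le (fun k => (inv_pos.2 (hE_pos k)).le)
        (fun k => inv_anti₀ (by positivity) (hn k).1)
        (by simpa using (summable_nat_add_iff 1).2 (Real.summable_nat_pow_inv.2 one_lt_two)))
      (fun k => hvar 1 (n k) (hn_pos k))
  filter_upwards [hsub] with x hx
  exact tendsto_div_of_monotone_of_subseq hE_mono (monotone_sum_Icc_one fun j => (h01 j x).1)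
    (fun m => Finset.sum_nonneg fun j _ => (h01 j x).1) hn_mono hE_pos
    (tendsto_succ_div_of_sq_le_of_le_sq_add_one (fun k => (hn k).1) (fun k => (hn k).2)) hx

theorem stmt4 {X : Type*} [MeasurableSpace X] (μ : Measure X) [IsProbabilityMeasure μ]
    (f : ℕ → X → ℝ) (hmeas : ∀ m, Measurable (f m))
    (h01 : ∀ m x, f m x ∈ Set.Icc (0 : ℝ) 1)
    (C : ℝ) (hC : 0 < C)
    (hvar : ∀ m n : ℕ, m ≤ n →
      ∫ x, (∑ i ∈ Finset.Icc m n, f i x - ∑ i ∈ Finset.Icc m n, ∫ y, f i y ∂μ) ^ 2 ∂μ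
        ≤ C * ∑ i ∈ Finset.Icc m n, ∫ y, f i y ∂μ)
    (hE : Tendsto (fun m : ℕ => ∑ j ∈ Finset.Icc 1 m, ∫ y, f j y ∂μ) atTop atTop) :
    ∀ᵐ x ∂μ, Tendsto
      (fun m : ℕ => (∑ j ∈ Finset.Icc 1 m, f j x) / (∑ j ∈ Finset.Icc 1 m, ∫ y, f j y ∂μ))
      atTop (nhds 1) :=
  stmt4_general μ f hmeas h01 C hvar hE
end

section
/- Let $(\mathcal{X},\mu)$ be a probability space with a measure-preserving $\mathbb{Z}$-action given by iterates of an invertible measure-preserving map, and let $\{B_m\}$ be a sequence of measurable sets. Suppose there exist $\eta>1$ and $C>0$ such that for all $i\neq j$, $\big|\mu(B_i h_{-i}\cap B_j h_{-j})-\mu(B_i)\mu(B_j)\big|\le C\frac{\sqrt{\mu(B_i)\mu(B_j)}}{|i-j|^{\eta}}$. Then there exists $C'>0$ such that for all $n>m\geq 1$, setting $f_i(x)=\chi_{B_i}(xh_i)$, one has $\int_{\mathcal{X}}\big(\sum_{i=m}^n f_i-\sum_{i=m}^n\mu(B_i)\big)^2 d\mu\le C'\sum_{i=m}^n\mu(B_i)$.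 -/
open MeasureTheory
open scoped ENNReal

/-!
Writing `f_i = 1_{A_i}` with `A_i = h_i⁻¹ B_i`, the integral is the variance of `∑ f_i`, i.e. the
sum of the covariances `μ(A_i ∩ A_j) - μ(A_i) μ(A_j)`. The diagonal terms are at most `μ(B_i)`;
off the diagonal, AM-GM `√(μ_i μ_j) ≤ (μ_i + μ_j) / 2` and symmetry reduce the double sum to
`∑_i μ_i ∑_{j ≠ i} |i - j|^{-η}`, and the inner sum is bounded by `∑_{k ∈ ℤ} |k|^{-η} < ∞`.
-/

open ProbabilityTheory Finset

section Indicators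

variable {Ω : Type*} [MeasurableSpace Ω] {μ : Measure Ω}

lemma memLp_indicator_one [IsFiniteMeasure μ] (p : ℝ≥0∞) {s : Set Ω} (hs : MeasurableSet s) :
    MemLp (s.indicator (1 : Ω → ℝ)) p μ :=
  memLp_indicator_const p hs 1 (.inr (measure_ne_top μ s))

lemma covariance_indicator_one [IsProbabilityMeasure μ] {s t : Set Ω} (hs : MeasurableSet s)
    (ht : MeasurableSet t) :
    cov[s.indicator 1, t.indicator 1; μ] = μ.real (s ∩ t) - μ.real s * μ.real t := by
  rw [covariance_eq_sub (memLp_indicator_one 2 hs) (memLp_indicator_one 2 ht),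
    ← Set.inter_indicator_one, integral_indicator_one (hs.inter ht), integral_indicator_one hs,
    integral_indicator_one ht]

lemma integral_sum_indicator_sub_sq [IsProbabilityMeasure μ] {ι : Type*} (s : Finset ι)
    {A : ι → Set Ω} (hA : ∀ i, MeasurableSet (A i)) :
    ∫ x, (∑ i ∈ s, (A i).indicator 1 x - ∑ i ∈ s, μ.real (A i)) ^ 2 ∂μ
      = ∑ i ∈ s, ∑ j ∈ s, (μ.real (A i ∩ A j) - μ.real (A i) * μ.real (A j)) := by
  have hmean : μ[fun x ↦ ∑ i ∈ s, (A i).indicator (1 : Ω → ℝ) x] = ∑ i ∈ s, μ.real (A i) := by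
    rw [integral_finsetSum s fun i _ ↦ (memLp_indicator_one 1 (hA i)).integrable le_rfl]
    exact sum_congr rfl fun i _ ↦ integral_indicator_one (hA i)
  rw [← hmean, ← variance_eq_integral (by fun_prop (disch := exact hA _)),
    variance_fun_sum' fun i _ ↦ memLp_indicator_one 2 (hA i)]
  exact sum_congr rfl fun i _ ↦ sum_congr rfl fun j _ ↦ covariance_indicator_one (hA i) (hA j)

end Indicators

lemma summable_inv_abs_int_rpow {η : ℝ} (hη : 1 < η) : Summable fun k : ℤ ↦ (|(k : ℝ)| ^ η)⁻¹ :=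
  (Real.summable_abs_int_rpow hη).congr fun k ↦ Real.rpow_neg (abs_nonneg (k : ℝ)) η

lemma sum_inv_rpow_abs_sub_le_tsum {η : ℝ} (hη : 1 < η) (s : Finset ℕ) (i : ℕ) :
    ∑ j ∈ s, (|(i : ℝ) - j| ^ η)⁻¹ ≤ ∑' k : ℤ, (|(k : ℝ)| ^ η)⁻¹ := by
  have hinj : Set.InjOn (fun j : ℕ ↦ (i : ℤ) - j) s := fun j _ j' _ h ↦ by simp_all
  calc ∑ j ∈ s, (|(i : ℝ) - j| ^ η)⁻¹
      = ∑ k ∈ s.image fun j : ℕ ↦ (i : ℤ) - j, (|(k : ℝ)| ^ η)⁻¹ := by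
        rw [sum_image hinj]; push_cast; rfl
    _ ≤ ∑' k : ℤ, (|(k : ℝ)| ^ η)⁻¹ :=
        (summable_inv_abs_int_rpow hη).sum_le_tsum _ fun _ _ ↦ by positivity

lemma sum_sum_sqrt_mul_div_rpow_abs_sub_le {η : ℝ} (hη : 1 < η) (s : Finset ℕ) {a : ℕ → ℝ}
    (ha : ∀ i, 0 ≤ a i) :
    ∑ i ∈ s, ∑ j ∈ s, √(a i * a j) / |(i : ℝ) - j| ^ η
      ≤ (∑' k : ℤ, (|(k : ℝ)| ^ η)⁻¹) * ∑ i ∈ s, a i := by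
  set T := ∑' k : ℤ, (|(k : ℝ)| ^ η)⁻¹
  have hsqrt : ∀ i j, √(a i * a j) ≤ (a i + a j) / 2 := fun i j ↦
    Real.sqrt_le_iff.2 ⟨by linarith [ha i, ha j], by nlinarith [sq_nonneg (a i - a j)]⟩
  calc ∑ i ∈ s, ∑ j ∈ s, √(a i * a j) / |(i : ℝ) - j| ^ η
      ≤ ∑ i ∈ s, ∑ j ∈ s,
          (a i / 2 * (|(i : ℝ) - j| ^ η)⁻¹ + a j / 2 * (|(j : ℝ) - i| ^ η)⁻¹) := by
        gcongr with i _ j _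
        rw [abs_sub_comm (j : ℝ), div_eq_mul_inv, ← add_mul, ← add_div]
        gcongr
        exact hsqrt i j
    _ = ∑ i ∈ s, a i / 2 * ∑ j ∈ s, (|(i : ℝ) - j| ^ η)⁻¹
          + ∑ j ∈ s, a j / 2 * ∑ i ∈ s, (|(j : ℝ) - i| ^ η)⁻¹ := by
        simp only [sum_add_distrib, mul_sum]
        exact congrArg _ sum_comm
    _ ≤ ∑ i ∈ s, a i / 2 * T + ∑ j ∈ s, a j / 2 * T := by
        gcongr ?_ + ?_ <;> exact sum_le_sum fun i _ ↦
          mul_le_mul_of_nonneg_left (sum_inv_rpow_abs_sub_le_tsum hη s i) (by linarith [ha i])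
    _ = T * ∑ i ∈ s, a i := by
        rw [← sum_add_distrib, mul_sum]
        exact sum_congr rfl fun i _ ↦ by ring

lemma sum_sum_le_of_le_sqrt_mul_div_rpow_abs_sub {η C : ℝ} (hη : 1 < η) (hC : 0 ≤ C)
    (s : Finset ℕ) {a : ℕ → ℝ} (ha : ∀ i, 0 ≤ a i) {c : ℕ → ℕ → ℝ} (hdiag : ∀ i, c i i ≤ a i)
    (hoff : ∀ i j, i ≠ j → c i j ≤ C * √(a i * a j) / |(i : ℝ) - j| ^ η) :
    ∑ i ∈ s, ∑ j ∈ s, c i j ≤ (1 + C * ∑' k : ℤ, (|(k : ℝ)| ^ η)⁻¹) * ∑ i ∈ s, a i := by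
  -- at `i = j` the second summand is a division by `0 ^ η = 0`, hence `0`
  have hpair (i j : ℕ) :
      c i j ≤ (if i = j then a i else 0) + C * √(a i * a j) / |(i : ℝ) - j| ^ η := by
    obtain rfl | hij := eq_or_ne i j
    · simpa [Real.zero_rpow (by linarith : η ≠ 0)] using hdiag i
    · simpa [hij] using hoff i j hij
  calc ∑ i ∈ s, ∑ j ∈ s, c i j
      ≤ ∑ i ∈ s, ∑ j ∈ s,
          ((if i = j then a i else 0) + C * √(a i * a j) / |(i : ℝ) - j| ^ η) :=
        sum_le_sum fun i _ ↦ sum_le_sum fun j _ ↦ hpair i j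
    _ = ∑ i ∈ s, a i + C * ∑ i ∈ s, ∑ j ∈ s, √(a i * a j) / |(i : ℝ) - j| ^ η := by
        simp only [sum_add_distrib, mul_sum, mul_div_assoc]
        congr 1
        exact sum_congr rfl fun i hi ↦ by rw [sum_ite_eq, if_pos hi]
    _ ≤ ∑ i ∈ s, a i + C * ((∑' k : ℤ, (|(k : ℝ)| ^ η)⁻¹) * ∑ i ∈ s, a i) := by
        gcongr
        exact sum_sum_sqrt_mul_div_rpow_abs_sub_le hη s ha
    _ = (1 + C * ∑' k : ℤ, (|(k : ℝ)| ^ η)⁻¹) * ∑ i ∈ s, a i := by ring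

theorem stmt11_general {X : Type*} [MeasurableSpace X] (μ : Measure X) [IsProbabilityMeasure μ]
    (h : ℤ → X → X) (hmeas : ∀ k : ℤ, MeasurePreserving (h k) μ μ)
    (B : ℕ → Set X) (hBmeas : ∀ i, MeasurableSet (B i))
    (η C : ℝ) (hη : 1 < η) (hC : 0 < C)
    (hcorr : ∀ i j : ℕ, i ≠ j →
      |(μ ((h (i : ℤ)) ⁻¹' (B i) ∩ (h (j : ℤ)) ⁻¹' (B j))).toReal
          - (μ (B i)).toReal * (μ (B j)).toReal|
        ≤ C * Real.sqrt ((μ (B i)).toReal * (μ (B j)).toReal) / |(i : ℝ) - (j : ℝ)| ^ η) :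
    ∃ C' : ℝ, 0 < C' ∧ ∀ m n : ℕ, 1 ≤ m → m < n →
      ∫ x, (∑ i ∈ Finset.Icc m n, Set.indicator (B i) (fun _ => (1 : ℝ)) (h (i : ℤ) x)
          - ∑ i ∈ Finset.Icc m n, (μ (B i)).toReal) ^ 2 ∂μ
        ≤ C' * ∑ i ∈ Finset.Icc m n, (μ (B i)).toReal := by
  refine ⟨1 + C * ∑' k : ℤ, (|(k : ℝ)| ^ η)⁻¹, by positivity, fun m n _ _ ↦ ?_⟩
  set A : ℕ → Set X := fun i ↦ h i ⁻¹' B i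
  have hA (i : ℕ) : MeasurableSet (A i) := (hmeas i).measurable (hBmeas i)
  have hμA (i : ℕ) : μ.real (A i) = μ.real (B i) :=
    (hmeas i).measureReal_preimage (hBmeas i).nullMeasurableSet
  calc ∫ x, (∑ i ∈ Icc m n, (B i).indicator (fun _ ↦ (1 : ℝ)) (h i x)
          - ∑ i ∈ Icc m n, μ.real (B i)) ^ 2 ∂μ
      = ∑ i ∈ Icc m n, ∑ j ∈ Icc m n, (μ.real (A i ∩ A j) - μ.real (A i) * μ.real (A j)) := by
        simp_rw [← hμA, ← integral_sum_indicator_sub_sq _ hA]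
        rfl
    _ ≤ (1 + C * ∑' k : ℤ, (|(k : ℝ)| ^ η)⁻¹) * ∑ i ∈ Icc m n, μ.real (B i) := by
        refine sum_sum_le_of_le_sqrt_mul_div_rpow_abs_sub hη hC.le _
          (fun _ ↦ measureReal_nonneg) (fun i ↦ ?_) (fun i j hij ↦ ?_)
        · simp [Set.inter_self, hμA, mul_self_nonneg]
        · rw [hμA, hμA]
          exact (le_abs_self _).trans (hcorr i j hij)

theorem stmt11 {X : Type*} [MeasurableSpace X] (μ : Measure X) [IsProbabilityMeasure μ]
    (h : ℤ → X → X) (hmeas : ∀ k : ℤ, MeasurePreserving (h k) μ μ)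
    (h0 : ∀ x, h 0 x = x)
    (hact : ∀ k l : ℤ, ∀ x : X, h (k + l) x = h k (h l x))
    (B : ℕ → Set X) (hBmeas : ∀ i, MeasurableSet (B i))
    (η C : ℝ) (hη : 1 < η) (hC : 0 < C)
    (hcorr : ∀ i j : ℕ, i ≠ j →
      |(μ ((h (i : ℤ)) ⁻¹' (B i) ∩ (h (j : ℤ)) ⁻¹' (B j))).toReal
          - (μ (B i)).toReal * (μ (B j)).toReal|
        ≤ C * Real.sqrt ((μ (B i)).toReal * (μ (B j)).toReal) / |(i : ℝ) - (j : ℝ)| ^ η) :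
    ∃ C' : ℝ, 0 < C' ∧ ∀ m n : ℕ, 1 ≤ m → m < n →
      ∫ x, (∑ i ∈ Finset.Icc m n, Set.indicator (B i) (fun _ => (1 : ℝ)) (h (i : ℤ) x)
          - ∑ i ∈ Finset.Icc m n, (μ (B i)).toReal) ^ 2 ∂μ
        ≤ C' * ∑ i ∈ Finset.Icc m n, (μ (B i)).toReal :=
  stmt11_general μ h hmeas B hBmeas η C hη hC hcorr
end
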